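/- Let V ≥ 1, r ≥ 1, and n ≤ N be natural numbers, and let ε, δ ∈ (0,1). Let X be a binomial random variable with r·n trials and success probability 1/V. If (N : ℝ) ≥ V/(r·δ·ε²), then Pr(|(V/r)·X − n| ≥ ε·N) ≤ δ. (This is the probabilistic core of the paper's multiple-updates Corollary: if each packet performs r independent update operations instead of at most one, then the sampling-accuracy guarantee is achieved after N > ψ/r packets, i.e. the convergence threshold shrinks by a factor of r; stated with the rigorous Chebyshev threshold in place of the normal quantile.) -/

import Mathlib

/-!
Since `(V/r)·X − n = (V/r)·(X − rn/V)`, the event is a deviation of `X` from its mean `rn/V` by at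
least `t = εNr/V`. The Bernstein basis evaluated at `p = 1/V` is the law of `X`, and the variance
identity for Bernstein polynomials gives it variance `rn·p(1 − p) ≤ rn/V`; Chebyshev's inequality
then bounds the probability by `Vn/(rε²N²) ≤ V/(rε²N) ≤ δ`.
-/

open MeasureTheory

def IsBinomial {Ω : Type*} [MeasurableSpace Ω] (μ : Measure Ω) (X : Ω → ℕ) (n : ℕ) (p : ℝ) :
    Prop :=
  ∀ k : ℕ, μ {ω | X ω = k} = ENNReal.ofReal ((n.choose k : ℝ) * p ^ k * (1 - p) ^ (n - k))

open Finset Polynomial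

lemma measure_preimage_le_tsum_indicator {Ω α : Type*} [MeasurableSpace Ω] [Countable α]
    (μ : Measure Ω) (X : Ω → α) (s : Set α) :
    μ (X ⁻¹' s) ≤ ∑' a, s.indicator (fun a ↦ μ (X ⁻¹' {a})) a := by
  rw [← _root_.tsum_subtype, ← Set.biUnion_preimage_singleton]
  exact measure_biUnion_le μ s.to_countable _

namespace bernsteinPolynomial

lemma eval_eq (n ν : ℕ) (x : ℝ) :
    (bernsteinPolynomial ℝ n ν).eval x = n.choose ν * x ^ ν * (1 - x) ^ (n - ν) := by
  simp [bernsteinPolynomial]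

lemma eval_nonneg (n ν : ℕ) {x : ℝ} (hx₀ : 0 ≤ x) (hx₁ : x ≤ 1) :
    0 ≤ (bernsteinPolynomial ℝ n ν).eval x := by
  rw [eval_eq]
  have : 0 ≤ 1 - x := by linarith
  positivity

lemma sum_sq_sub_mul_eval (n : ℕ) (x : ℝ) :
    ∑ ν ∈ range (n + 1), (n * x - ν) ^ 2 * (bernsteinPolynomial ℝ n ν).eval x
      = n * x * (1 - x) := by
  simpa [eval_finsetSum, nsmul_eq_mul] using congrArg (eval x) (variance ℝ n)

-- Chebyshev's inequality for the binomial distribution with `n` trials and parameter `x`.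
lemma sum_filter_le_abs_sub_eval_le (n : ℕ) {x t : ℝ} (hx₀ : 0 ≤ x) (hx₁ : x ≤ 1) (ht : 0 < t) :
    ∑ ν ∈ range (n + 1) with t ≤ |((ν : ℕ) : ℝ) - n * x|, (bernsteinPolynomial ℝ n ν).eval x
      ≤ n * x * (1 - x) / t ^ 2 := by
  rw [← sum_sq_sub_mul_eval, le_div_iff₀ (by positivity), sum_mul]
  calc ∑ ν ∈ range (n + 1) with t ≤ |((ν : ℕ) : ℝ) - n * x|,
        (bernsteinPolynomial ℝ n ν).eval x * t ^ 2
      ≤ ∑ ν ∈ range (n + 1) with t ≤ |((ν : ℕ) : ℝ) - n * x|,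
          (n * x - ν) ^ 2 * (bernsteinPolynomial ℝ n ν).eval x := by
        refine sum_le_sum fun ν hν ↦ ?_
        have hsq : t ^ 2 ≤ (n * x - ν) ^ 2 := by
          have := pow_le_pow_left₀ ht.le (mem_filter.1 hν).2 2
          rwa [sq_abs, ← neg_sub, neg_sq] at this
        rw [mul_comm]
        exact mul_le_mul_of_nonneg_right hsq (eval_nonneg n ν hx₀ hx₁)
    _ ≤ ∑ ν ∈ range (n + 1), (n * x - ν) ^ 2 * (bernsteinPolynomial ℝ n ν).eval x :=
        sum_le_sum_of_subset_of_nonneg (filter_subset _ _) fun ν _ _ ↦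
          mul_nonneg (sq_nonneg _) (eval_nonneg n ν hx₀ hx₁)

end bernsteinPolynomial

lemma IsBinomial.measure_le_abs_sub_le {Ω : Type*} [MeasurableSpace Ω] {μ : Measure Ω}
    {X : Ω → ℕ} {n : ℕ} {p : ℝ} (hX : IsBinomial μ X n p) (hp₀ : 0 ≤ p) (hp₁ : p ≤ 1)
    {t : ℝ} (ht : 0 < t) :
    μ {ω | t ≤ |(X ω : ℝ) - n * p|} ≤ ENNReal.ofReal (n * p * (1 - p) / t ^ 2) := by
  set s : Set ℕ := {k | t ≤ |(k : ℝ) - n * p|}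
  set b : ℕ → ℝ := fun k ↦ (bernsteinPolynomial ℝ n k).eval p
  have hlaw : ∀ k, μ (X ⁻¹' {k}) = ENNReal.ofReal (b k) := fun k ↦
    (hX k).trans (by simp only [b, bernsteinPolynomial.eval_eq])
  calc μ (X ⁻¹' s)
      ≤ ∑' k, s.indicator (fun k ↦ μ (X ⁻¹' {k})) k :=
        measure_preimage_le_tsum_indicator μ X s
    _ = ∑ k ∈ range (n + 1), s.indicator (fun k ↦ ENNReal.ofReal (b k)) k := by
        simp_rw [hlaw]
        refine tsum_eq_sum fun k hk ↦ ?_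
        rw [mem_range, not_lt] at hk
        simp [b, bernsteinPolynomial.eq_zero_of_lt ℝ (Nat.lt_of_succ_le hk)]
    _ = ENNReal.ofReal (∑ k ∈ range (n + 1) with t ≤ |((k : ℕ) : ℝ) - n * p|, b k) := by
        rw [ENNReal.ofReal_sum_of_nonneg fun k _ ↦ bernsteinPolynomial.eval_nonneg n k hp₀ hp₁]
        exact sum_indicator_eq_sum_filter _ (fun _ k ↦ ENNReal.ofReal (b k)) (fun _ ↦ s) id
    _ ≤ ENNReal.ofReal (n * p * (1 - p) / t ^ 2) :=
        ENNReal.ofReal_le_ofReal (bernsteinPolynomial.sum_filter_le_abs_sub_eval_le n hp₀ hp₁ ht)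

/-- **Multiple updates.** If each of the `n ≤ N` packets of a prefix performs `r`
independent update operations, so that `X ∼ Binomial(r·n, 1/V)`, and `N ≥ V / (r·δ·ε²)`,
then `Pr(|(V/r)·X − n| ≥ ε·N) ≤ δ`: the convergence threshold shrinks by a factor `r`. -/
theorem binomial_multiple_updates {Ω : Type*} [MeasurableSpace Ω] (μ : Measure Ω)
    [IsProbabilityMeasure μ] (V r n N : ℕ) (hV : 1 ≤ V) (hr : 1 ≤ r) (hnN : n ≤ N) (ε δ : ℝ)
    (hε : ε ∈ Set.Ioo (0 : ℝ) 1) (hδ : δ ∈ Set.Ioo (0 : ℝ) 1)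
    (X : Ω → ℕ) (hX : IsBinomial μ X (r * n) (1 / (V : ℝ)))
    (hthresh : (N : ℝ) ≥ (V : ℝ) / ((r : ℝ) * δ * ε ^ 2)) :
    μ {ω | ε * (N : ℝ) ≤ |((V : ℝ) / (r : ℝ)) * (X ω : ℝ) - (n : ℝ)|} ≤ ENNReal.ofReal δ := by
  obtain ⟨hε, -⟩ := hε
  obtain ⟨hδ, -⟩ := hδ
  have hV₀ : (0 : ℝ) < V := by exact_mod_cast hV
  have hr₀ : (0 : ℝ) < r := by exact_mod_cast hr
  have hN₀ : (0 : ℝ) < N := (by positivity : (0 : ℝ) < V / (r * δ * ε ^ 2)).trans_le hthresh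
  have hp₁ : 1 / (V : ℝ) ≤ 1 := (div_le_one hV₀).2 (by exact_mod_cast hV)
  set t := ε * N * r / V with ht
  have hevent : {ω | ε * (N : ℝ) ≤ |((V : ℝ) / r) * X ω - n|}
      = {ω | t ≤ |(X ω : ℝ) - ↑(r * n) * (1 / (V : ℝ))|} := Set.ext fun ω ↦ by
    have hscale : (V : ℝ) / r * X ω - n = V / r * (X ω - ↑(r * n) * (1 / V)) := by
      push_cast; field_simp
    rw [Set.mem_ofPred_eq, Set.mem_ofPred_eq, hscale, abs_mul, abs_of_pos (by positivity),
      ← div_le_iff₀' (by positivity), div_div_eq_mul_div]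
  rw [hevent]
  refine (hX.measure_le_abs_sub_le (by positivity) hp₁ (by positivity)).trans
    (ENNReal.ofReal_le_ofReal ?_)
  calc ↑(r * n) * (1 / (V : ℝ)) * (1 - 1 / V) / t ^ 2
      ≤ ↑(r * n) * (1 / (V : ℝ)) / t ^ 2 := by
        gcongr ?_ / _
        exact mul_le_of_le_one_right (by positivity) (by linarith [one_div_pos.2 hV₀])
    _ = V * n / (r * ε ^ 2 * N ^ 2) := by
        rw [ht]; push_cast; field_simp
    _ ≤ V * N / (r * ε ^ 2 * N ^ 2) := by
        gcongr
    _ = V / (r * δ * ε ^ 2) * δ / N := by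
        field_simp
    _ ≤ δ := by
        rw [div_le_iff₀ hN₀, mul_comm δ]
        gcongr
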